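/- For $t\in(-1,1)$ let $\rho=\rho(t)=\sqrt{1+t^2}$, $y(t)=(2-\rho)^{-2/3}(1+\rho)^{-1/3}$, $x(t)=t\,y(t)$, and define the curvature $\kappa(t)=\dfrac{x'(t)\,y''(t)-y'(t)\,x''(t)}{\big(x'(t)^2+y'(t)^2\big)^{3/2}}$. Then for every $t\in(-1,1)$, $\kappa(t)=\dfrac{(2-\rho)^{5/3}\,(1+\rho)^{5/6}}{2^{3/2}\,\rho^{5/2}}$, and in particular $\kappa(t)>0$. -/

import Mathlib

open Set

noncomputable def ρ (t : ℝ) : ℝ := Real.sqrt (1 + t ^ 2)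

noncomputable def yfun (t : ℝ) : ℝ :=
  (2 - ρ t) ^ (-(2 : ℝ) / 3) * (1 + ρ t) ^ (-(1 : ℝ) / 3)

noncomputable def xfun (t : ℝ) : ℝ := t * yfun t

noncomputable def κfun (t : ℝ) : ℝ :=
  (deriv xfun t * deriv (deriv yfun) t - deriv yfun t * deriv (deriv xfun) t) /
    ((deriv xfun t) ^ 2 + (deriv yfun t) ^ 2) ^ ((3 : ℝ) / 2)

open Filter Topology

/-!
With `p = (2 - ρ)^(-1/3)` and `q = (1 + ρ)^(-1/3)` the curve is `(t p² q, p² q)`, and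
`ρ' = t / ρ` gives `p' = t p⁴ / (3ρ)`, `q' = -t q⁴ / (3ρ)`. Hence all derivatives of `x`
and `y` are polynomials in `t`, `1/ρ`, `p`, `q`, and modulo `p³ (2 - ρ) = 1`, `q³ (1 + ρ) = 1`,
`ρ² = 1 + t²` one finds `x' = p⁵ q`, `y' = t p⁵ q⁴`, `x' y'' - y' x'' = W / ρ` and
`x'² + y'² = 2ρ W` with `W = p¹⁰ q⁵ > 0`. So `κ = W^(-1/2) / (2^(3/2) ρ^(5/2))`.
-/

lemma rpow_neg_third_pow {u : ℝ} (hu : 0 ≤ u) (n : ℕ) :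
    (u ^ (-(1 : ℝ) / 3)) ^ n = u ^ (-(n : ℝ) / 3) := by
  rw [← Real.rpow_natCast, ← Real.rpow_mul hu]
  ring_nf

lemma rpow_neg_third_pow_three_mul {u : ℝ} (hu : 0 < u) : (u ^ (-(1 : ℝ) / 3)) ^ 3 * u = 1 := by
  rw [rpow_neg_third_pow hu.le]
  norm_num [Real.rpow_neg_one, hu.ne']

lemma HasDerivAt.rpow_neg_one_third {u : ℝ → ℝ} {u' t : ℝ} (hu : HasDerivAt u u' t)
    (ht : 0 < u t) :
    HasDerivAt (fun s => u s ^ (-(1 : ℝ) / 3)) (-(u' / 3) * (u t ^ (-(1 : ℝ) / 3)) ^ 4) t := by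
  convert hu.rpow_const (p := -(1 : ℝ) / 3) (Or.inl ht.ne') using 1
  rw [rpow_neg_third_pow ht.le, show -(1 : ℝ) / 3 - 1 = -((4 : ℕ) : ℝ) / 3 by norm_num]
  ring

lemma natCast_mul_pow_sub_one_mul_pow_four (k : ℕ) (x : ℝ) :
    (k : ℝ) * x ^ (k - 1) * x ^ 4 = k * x ^ (k + 3) := by
  cases k with
  | zero => simp
  | succ k => rw [Nat.add_sub_cancel]; ring

lemma rpow_pow_rpow {u : ℝ} (hu : 0 ≤ u) (a b : ℝ) (n : ℕ) :
    ((u ^ a) ^ n) ^ b = u ^ (a * n * b) := by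
  rw [← Real.rpow_natCast, ← Real.rpow_mul hu, ← Real.rpow_mul hu]

lemma div_div_two_mul_mul_rpow_three_halves {W r : ℝ} (hW : 0 < W) (hr : 0 < r) :
    W / r / (2 * r * W) ^ ((3 : ℝ) / 2) =
      W ^ (-(1 : ℝ) / 2) / ((2 : ℝ) ^ ((3 : ℝ) / 2) * r ^ ((5 : ℝ) / 2)) := by
  have hW3 : W ^ ((3 : ℝ) / 2) = W * W ^ ((1 : ℝ) / 2) := by
    rw [← Real.rpow_one_add' hW.le (by norm_num)]; norm_num
  have hr5 : r ^ ((5 : ℝ) / 2) = r * r ^ ((3 : ℝ) / 2) := by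
    rw [← Real.rpow_one_add' hr.le (by norm_num)]; norm_num
  have hW1 : W ^ (-(1 : ℝ) / 2) = (W ^ ((1 : ℝ) / 2))⁻¹ := by
    rw [← Real.rpow_neg hW.le]; norm_num
  rw [Real.mul_rpow (by positivity) hW.le, Real.mul_rpow (by norm_num) hr.le, hW3, hr5, hW1]
  have : 0 < W ^ ((1 : ℝ) / 2) := by positivity
  field_simp

lemma rho_pos (t : ℝ) : 0 < ρ t := Real.sqrt_pos.mpr (by positivity)

lemma rho_sq (t : ℝ) : ρ t ^ 2 = 1 + t ^ 2 := Real.sq_sqrt (by positivity)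

lemma continuous_rho : Continuous ρ := by unfold ρ; fun_prop

lemma rho_lt_two {t : ℝ} (ht : t ∈ Ioo (-1 : ℝ) 1) : ρ t < 2 := by
  have : ρ t ^ 2 < 2 ^ 2 := by rw [rho_sq]; nlinarith [ht.1, ht.2]
  nlinarith [rho_pos t]

lemma hasDerivAt_rho (t : ℝ) : HasDerivAt ρ (t / ρ t) t := by
  refine (((hasDerivAt_pow 2 t).const_add 1).sqrt (by positivity)).congr_deriv ?_
  rw [show ρ t = √(1 + t ^ 2) from rfl]
  field_simp
  push_cast
  ring

noncomputable def pfun (t : ℝ) : ℝ := (2 - ρ t) ^ (-(1 : ℝ) / 3)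

noncomputable def qfun (t : ℝ) : ℝ := (1 + ρ t) ^ (-(1 : ℝ) / 3)

lemma qfun_pos (t : ℝ) : 0 < qfun t := Real.rpow_pos_of_pos (by linarith [rho_pos t]) _

lemma qfun_pow_three_mul (t : ℝ) : qfun t ^ 3 * (1 + ρ t) = 1 :=
  rpow_neg_third_pow_three_mul (by linarith [rho_pos t])

lemma hasDerivAt_qfun (t : ℝ) : HasDerivAt qfun (-(t / (3 * ρ t)) * qfun t ^ 4) t :=
  (((hasDerivAt_rho t).const_add 1).rpow_neg_one_third (by linarith [rho_pos t])).congr_deriv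
    (by unfold qfun; ring)

section

variable {t : ℝ}

lemma pfun_pos (h : ρ t < 2) : 0 < pfun t := Real.rpow_pos_of_pos (by linarith) _

lemma pfun_pow_three_mul (h : ρ t < 2) : pfun t ^ 3 * (2 - ρ t) = 1 :=
  rpow_neg_third_pow_three_mul (by linarith)

lemma hasDerivAt_pfun (h : ρ t < 2) : HasDerivAt pfun (t / (3 * ρ t) * pfun t ^ 4) t :=
  (((hasDerivAt_rho t).const_sub 2).rpow_neg_one_third (by linarith)).congr_deriv
    (by unfold pfun; ring)

lemma hasDerivAt_pfun_pow_mul_qfun_pow (m n : ℕ) (h : ρ t < 2) :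
    HasDerivAt (fun s => pfun s ^ m * qfun s ^ n)
      (t / (3 * ρ t) * (m * (1 + ρ t) - n * (2 - ρ t)) * (pfun t ^ (m + 3) * qfun t ^ (n + 3)))
      t := by
  refine (((hasDerivAt_pfun h).fun_pow m).mul ((hasDerivAt_qfun t).fun_pow n)).congr_deriv ?_
  linear_combination (t / (3 * ρ t)) *
    (qfun t ^ n * natCast_mul_pow_sub_one_mul_pow_four m (pfun t) -
      pfun t ^ m * natCast_mul_pow_sub_one_mul_pow_four n (qfun t) +
      n * pfun t ^ m * qfun t ^ (n + 3) * pfun_pow_three_mul h -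
      m * pfun t ^ (m + 3) * qfun t ^ n * qfun_pow_three_mul t)

lemma eventually_rho_lt_two (h : ρ t < 2) : ∀ᶠ s in 𝓝 t, ρ s < 2 :=
  (isOpen_lt continuous_rho continuous_const).mem_nhds h

-- Only where `ρ < 2`: for negative `u`, `rpow` breaks `(u ^ (-1/3)) ^ 2 = u ^ (-2/3)`.
lemma yfun_eventuallyEq (h : ρ t < 2) : yfun =ᶠ[𝓝 t] fun s => pfun s ^ 2 * qfun s ^ 1 := by
  filter_upwards [eventually_rho_lt_two h] with s hs
  rw [yfun, pfun, qfun, rpow_neg_third_pow (by linarith),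
    rpow_neg_third_pow (by linarith [rho_pos s])]
  norm_num

lemma hasDerivAt_yfun (h : ρ t < 2) : HasDerivAt yfun (t * (pfun t ^ 5 * qfun t ^ 4)) t := by
  have := (rho_pos t).ne'
  refine ((hasDerivAt_pfun_pow_mul_qfun_pow 2 1 h).congr_of_eventuallyEq
    (yfun_eventuallyEq h)).congr_deriv ?_
  field_simp
  ring

lemma hasDerivAt_xfun (h : ρ t < 2) : HasDerivAt xfun (pfun t ^ 5 * qfun t ^ 1) t := by
  refine ((hasDerivAt_id' t).fun_mul (hasDerivAt_yfun h)).congr_deriv ?_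
  rw [(yfun_eventuallyEq h).eq_of_nhds]
  linear_combination -(pfun t ^ 2 * qfun t) * pfun_pow_three_mul h +
    ((ρ t - 1) * pfun t ^ 5 * qfun t) * qfun_pow_three_mul t -
    (pfun t ^ 5 * qfun t ^ 4) * rho_sq t

lemma deriv_deriv_xfun (h : ρ t < 2) :
    deriv (deriv xfun) t = t * (1 + 2 * ρ t) / ρ t * (pfun t ^ 8 * qfun t ^ 4) := by
  have hx : deriv xfun =ᶠ[𝓝 t] fun s => pfun s ^ 5 * qfun s ^ 1 := by
    filter_upwards [eventually_rho_lt_two h] with s hs using (hasDerivAt_xfun hs).deriv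
  rw [hx.deriv_eq, (hasDerivAt_pfun_pow_mul_qfun_pow 5 1 h).deriv]
  have := (rho_pos t).ne'
  field_simp
  ring

lemma deriv_deriv_yfun (h : ρ t < 2) :
    deriv (deriv yfun) t =
      pfun t ^ 5 * qfun t ^ 4 + t ^ 2 * (3 * ρ t - 1) / ρ t * (pfun t ^ 8 * qfun t ^ 7) := by
  have hy : deriv yfun =ᶠ[𝓝 t] fun s => s * (pfun s ^ 5 * qfun s ^ 4) := by
    filter_upwards [eventually_rho_lt_two h] with s hs using (hasDerivAt_yfun hs).deriv
  rw [hy.deriv_eq, ((hasDerivAt_id' t).fun_mul (hasDerivAt_pfun_pow_mul_qfun_pow 5 4 h)).deriv]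
  have := (rho_pos t).ne'
  field_simp
  ring

lemma deriv_mul_deriv_deriv_sub (h : ρ t < 2) :
    deriv xfun t * deriv (deriv yfun) t - deriv yfun t * deriv (deriv xfun) t =
      pfun t ^ 10 * qfun t ^ 5 / ρ t := by
  rw [(hasDerivAt_xfun h).deriv, (hasDerivAt_yfun h).deriv, deriv_deriv_xfun h, deriv_deriv_yfun h]
  linear_combination -(t ^ 2 / ρ t * pfun t ^ 10 * qfun t ^ 8) * pfun_pow_three_mul h -
    ((ρ t - 1) / ρ t * pfun t ^ 10 * qfun t ^ 5) * qfun_pow_three_mul t +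
    (pfun t ^ 10 * qfun t ^ 8 / ρ t) * rho_sq t -
    pfun t ^ 10 * qfun t ^ 5 * mul_inv_cancel₀ (rho_pos t).ne'

lemma deriv_sq_add_deriv_sq (h : ρ t < 2) :
    deriv xfun t ^ 2 + deriv yfun t ^ 2 = 2 * ρ t * (pfun t ^ 10 * qfun t ^ 5) := by
  rw [(hasDerivAt_xfun h).deriv, (hasDerivAt_yfun h).deriv]
  linear_combination
    -(pfun t ^ 10 * qfun t ^ 2 * (1 - (ρ t - 1) * qfun t ^ 3)) * qfun_pow_three_mul t -
      (pfun t ^ 10 * qfun t ^ 8) * rho_sq t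

lemma pfun_pow_mul_qfun_pow_rpow (h : ρ t < 2) :
    (pfun t ^ 10 * qfun t ^ 5) ^ (-(1 : ℝ) / 2) =
      (2 - ρ t) ^ ((5 : ℝ) / 3) * (1 + ρ t) ^ ((5 : ℝ) / 6) := by
  have := qfun_pos t
  rw [Real.mul_rpow (by positivity) (by positivity), pfun, qfun, rpow_pow_rpow (by linarith),
    rpow_pow_rpow (by linarith [rho_pos t])]
  norm_num

lemma κfun_eq (h : ρ t < 2) :
    κfun t = (2 - ρ t) ^ ((5 : ℝ) / 3) * (1 + ρ t) ^ ((5 : ℝ) / 6) /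
      ((2 : ℝ) ^ ((3 : ℝ) / 2) * ρ t ^ ((5 : ℝ) / 2)) := by
  have hW : 0 < pfun t ^ 10 * qfun t ^ 5 := by
    have := pfun_pos h
    have := qfun_pos t
    positivity
  rw [κfun, deriv_mul_deriv_deriv_sub h, deriv_sq_add_deriv_sq h,
    div_div_two_mul_mul_rpow_three_halves hW (rho_pos t), pfun_pow_mul_qfun_pow_rpow h]

end

/-- The curvature of the boundary parametrization, and its positivity. -/
theorem curvature_formula_and_pos :
    ∀ t ∈ Ioo (-1 : ℝ) 1,
      κfun t =
        (2 - ρ t) ^ ((5 : ℝ) / 3) * (1 + ρ t) ^ ((5 : ℝ) / 6) /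
          ((2 : ℝ) ^ ((3 : ℝ) / 2) * ρ t ^ ((5 : ℝ) / 2)) ∧
      0 < κfun t := by
  intro t ht
  have h := rho_lt_two ht
  have := rho_pos t
  have : 0 < 2 - ρ t := by linarith
  rw [κfun_eq h]
  exact ⟨rfl, by positivity⟩
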